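/- arXiv:1911.10610 — 9 statements merged into one kernel-verified Lean document; each statement's English description precedes it below -/
import Mathlib

section
/- Let R and B be disjoint finite sets of points in the plane with |R| = |B| = n ≥ 2, and let E be a max-sum bichromatic matching of R and B. Then every pair of disks induced by the matching intersect: for any two pairs (a,a') and (b,b') in E (with a,b ∈ R and a',b' ∈ B), the disks D_{aa'} and D_{bb'} have a common point. -/
/-!
Exchanging the partners `a'`, `b'` of `a`, `b` cannot lengthen a max-sum matching, so
`‖a - b'‖ + ‖b - a'‖ ≤ ‖a - a'‖ + ‖b - b'‖`. The midpoints of `aa'` and `bb'` are at distance at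
most half the left-hand side, hence at most the sum of the radii of `D_{aa'}` and `D_{bb'}`.
-/

noncomputable section

/-- Points of the plane with the Euclidean norm. -/
abbrev Pt : Type := EuclideanSpace ℝ (Fin 2)

/-- The closed disk with diameter the segment `pq`: center `(p+q)/2`, radius `‖p-q‖/2`. -/
def disk (p q : Pt) : Set Pt := Metric.closedBall (midpoint ℝ p q) (dist p q / 2)


/-- Total Euclidean length of the bichromatic matching that matches `p ∈ R` with `f p`. -/
def bmCost (R : Finset Pt) (f : Pt → Pt) : ℝ := ∑ p ∈ R, dist p (f p)

/-- `f` is a max-sum bichromatic matching of `R` and `B`: it is a bijection from `R` onto `B`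
maximizing the total Euclidean distance of matched pairs. -/
def IsMaxSumBichromatic (R B : Finset Pt) (f : Pt → Pt) : Prop :=
  Set.BijOn f ↑R ↑B ∧ ∀ g : Pt → Pt, Set.BijOn g ↑R ↑B → bmCost R g ≤ bmCost R f

open Finset

theorem disk_inter_nonempty_of_dist_add_dist_le {p p' q q' : Pt}
    (h : dist p q' + dist q p' ≤ dist p p' + dist q q') :
    (disk p p' ∩ disk q q').Nonempty := by
  rw [← Set.not_disjoint_iff_nonempty_inter, disk, disk,
    disjoint_closedBall_closedBall_iff (by positivity) (by positivity), not_lt]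
  have hmid := dist_midpoint_midpoint_le p p' q' q
  rw [midpoint_comm q' q, dist_comm p' q] at hmid
  linarith

theorem bmCost_comp_swap {R : Finset Pt} {f : Pt → Pt} {a b : Pt} (ha : a ∈ R) (hb : b ∈ R)
    (hab : a ≠ b) :
    bmCost R (f ∘ Equiv.swap a b) + (dist a (f a) + dist b (f b)) =
      bmCost R f + (dist a (f b) + dist b (f a)) := by
  have hb' : b ∈ R.erase a := mem_erase.2 ⟨hab.symm, hb⟩
  have hrest : ∑ p ∈ (R.erase a).erase b, dist p (f (Equiv.swap a b p)) =
      ∑ p ∈ (R.erase a).erase b, dist p (f p) :=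
    sum_congr rfl fun p hp => by
      obtain ⟨hpb, hpa, -⟩ : p ≠ b ∧ p ≠ a ∧ p ∈ R := by simpa using hp
      rw [Equiv.swap_apply_of_ne_of_ne hpa hpb]
  simp only [bmCost, Function.comp_apply]
  rw [← add_sum_erase R _ ha, ← add_sum_erase _ _ hb', ← add_sum_erase R _ ha,
    ← add_sum_erase _ _ hb', hrest, Equiv.swap_apply_left, Equiv.swap_apply_right]
  ring

theorem IsMaxSumBichromatic.dist_add_dist_le {R B : Finset Pt} {f : Pt → Pt}
    (hf : IsMaxSumBichromatic R B f) {a b : Pt} (ha : a ∈ R) (hb : b ∈ R) :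
    dist a (f b) + dist b (f a) ≤ dist a (f a) + dist b (f b) := by
  rcases eq_or_ne a b with rfl | hab
  · rfl
  have hswap := hf.2 _ (hf.1.comp (Equiv.swap_bijOn_self (iff_of_true ha hb)))
  linarith [bmCost_comp_swap (f := f) ha hb hab]


theorem stmt0_general (R B : Finset Pt) (f : Pt → Pt)
    (hf : IsMaxSumBichromatic R B f)
    (a b : Pt) (ha : a ∈ R) (hb : b ∈ R) :
    (disk a (f a) ∩ disk b (f b)).Nonempty :=
  disk_inter_nonempty_of_dist_add_dist_le (hf.dist_add_dist_le ha hb)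

/-- Every pair of disks induced by a max-sum bichromatic matching intersect. -/
theorem stmt0 (n : ℕ) (hn : 2 ≤ n) (R B : Finset Pt) (hdisj : Disjoint R B)
    (hR : R.card = n) (hB : B.card = n) (f : Pt → Pt)
    (hf : IsMaxSumBichromatic R B f)
    (a b : Pt) (ha : a ∈ R) (hb : b ∈ R) (hab : a ≠ b) :
    (disk a (f a) ∩ disk b (f b)).Nonempty :=
  stmt0_general R B f hf a b ha hb
end
end

section
/- There exist disjoint point sets R and B in the plane with |R| = |B| = 3 such that, for every max-sum bichromatic matching E of R and B, the intersection of the three disks {D_{pq} : (p,q) ∈ E} is empty. -/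
/-!
Take `R = {(-1,0), (-3,-2), (5,4)}` and `B = {(-4,4), (1,-1), (0,0)}`. Comparing the six
bijections, the unique max-sum matching pairs the `i`-th red point with the `i`-th blue one, at
total length `5 + √17 + √41`. By Thales, `x ∈ D_{pq}` iff `⟪p - x, q - x⟫ ≤ 0`; for these three pairs the
sum of the three inner products is `3 ‖x - (-1/3, 5/6)‖² + 7/12 > 0`, so no point lies in all three
disks.
-/

noncomputable section

theorem norm_smul_half_add_sq_sub_sq {E : Type*} [NormedAddCommGroup E] [InnerProductSpace ℝ E]
    (u v : E) : ‖(2⁻¹ : ℝ) • (u + v)‖ ^ 2 - (‖u - v‖ / 2) ^ 2 = inner ℝ u v := by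
  rw [norm_smul, mul_pow, div_pow, norm_add_sq_real, norm_sub_sq_real]
  norm_num
  ring

theorem mem_disk_iff_inner_nonpos {p q x : Pt} :
    x ∈ disk p q ↔ inner ℝ (p - x) (q - x) ≤ 0 := by
  have hm : midpoint ℝ p q - x = (2⁻¹ : ℝ) • ((p - x) + (q - x)) := by
    rw [midpoint_eq_smul_add, invOf_eq_inv]
    module
  rw [← norm_smul_half_add_sq_sub_sq, ← hm, sub_sub_sub_cancel_right, sub_nonpos, disk,
    Metric.mem_closedBall, dist_comm, dist_eq_norm, dist_eq_norm]
  exact (sq_le_sq₀ (norm_nonneg _) (div_nonneg (norm_nonneg _) zero_le_two)).symm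

theorem dist_toLp_pair (a b c d : ℝ) :
    dist (!₂[a, b] : Pt) !₂[c, d] = √((a - c) ^ 2 + (b - d) ^ 2) := by
  simp [EuclideanSpace.dist_eq, Fin.sum_univ_two, Real.dist_eq, sq_abs]

theorem Set.BijOn.perm_three {α β : Type*} {f : α → β} {a b c : α} {a' b' c' : β}
    (hf : BijOn f {a, b, c} {a', b', c'}) (hab : a ≠ b) (hac : a ≠ c) (hbc : b ≠ c) :
    (f a = a' ∧ f b = b' ∧ f c = c') ∨ (f a = a' ∧ f b = c' ∧ f c = b') ∨
    (f a = b' ∧ f b = a' ∧ f c = c') ∨ (f a = b' ∧ f b = c' ∧ f c = a') ∨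
    (f a = c' ∧ f b = a' ∧ f c = b') ∨ (f a = c' ∧ f b = b' ∧ f c = a') := by
  have ha : f a ∈ ({a', b', c'} : Set β) := hf.mapsTo (by simp)
  have hb : f b ∈ ({a', b', c'} : Set β) := hf.mapsTo (by simp)
  have hc : f c ∈ ({a', b', c'} : Set β) := hf.mapsTo (by simp)
  have hab' : f a ≠ f b := hf.injOn.ne (by simp) (by simp) hab
  have hac' : f a ≠ f c := hf.injOn.ne (by simp) (by simp) hac
  have hbc' : f b ≠ f c := hf.injOn.ne (by simp) (by simp) hbc
  simp only [mem_insert_iff, mem_singleton_iff] at ha hb hc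
  rcases ha with ha | ha | ha <;> rcases hb with hb | hb | hb <;> rcases hc with hc | hc | hc <;>
    simp_all

theorem Set.bijOn_ite_three {α β : Type*} [DecidableEq α] {a b c : α} {a' b' c' : β}
    (hab : a ≠ b) (hac : a ≠ c) (hbc : b ≠ c) (hab' : a' ≠ b') (hac' : a' ≠ c')
    (hbc' : b' ≠ c') :
    BijOn (fun x => if x = a then a' else if x = b then b' else c') {a, b, c} {a', b', c'} := by
  refine ⟨?_, ?_, ?_⟩
  · simp [MapsTo, hab.symm, hac.symm, hbc.symm]
  · rintro x (rfl | rfl | rfl) y (rfl | rfl | rfl) <;> simp_all [eq_comm]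
  · rintro y (rfl | rfl | rfl)
    exacts [⟨a, by simp⟩, ⟨b, by simp [hab.symm]⟩, ⟨c, by simp [hac.symm, hbc.symm]⟩]

theorem bmCost_three {a b c : Pt} (hab : a ≠ b) (hac : a ≠ c) (hbc : b ≠ c) (g : Pt → Pt) :
    bmCost {a, b, c} g = dist a (g a) + dist b (g b) + dist c (g c) := by
  rw [bmCost, Finset.sum_insert (by simp [hab, hac]), Finset.sum_pair hbc, add_assoc]

def red₁ : Pt := !₂[-1, 0]
def red₂ : Pt := !₂[-3, -2]
def red₃ : Pt := !₂[5, 4]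
def blue₁ : Pt := !₂[-4, 4]
def blue₂ : Pt := !₂[1, -1]
def blue₃ : Pt := !₂[0, 0]

def reds : Finset Pt := {red₁, red₂, red₃}
def blues : Finset Pt := {blue₁, blue₂, blue₃}

theorem disjoint_reds_blues : Disjoint reds blues := by
  norm_num [reds, blues, red₁, red₂, red₃, blue₁, blue₂, blue₃]

theorem card_reds : reds.card = 3 := by
  norm_num [reds, red₁, red₂, red₃, Finset.card_insert_of_notMem, Finset.card_pair]

theorem card_blues : blues.card = 3 := by
  norm_num [blues, blue₁, blue₂, blue₃, Finset.card_insert_of_notMem, Finset.card_pair]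

theorem eq_of_isMaxSumBichromatic {f : Pt → Pt} (hf : IsMaxSumBichromatic reds blues f) :
    f red₁ = blue₁ ∧ f red₂ = blue₂ ∧ f red₃ = blue₃ := by
  obtain ⟨hbij, hmax⟩ := hf
  have h₁₂ : red₁ ≠ red₂ := by norm_num [red₁, red₂]
  have h₁₃ : red₁ ≠ red₃ := by norm_num [red₁, red₃]
  have h₂₃ : red₂ ≠ red₃ := by norm_num [red₂, red₃]
  have hbest := hmax _ (by
    simpa only [reds, blues, Finset.coe_insert, Finset.coe_singleton] using
      Set.bijOn_ite_three h₁₂ h₁₃ h₂₃ (by norm_num [blue₁, blue₂] : blue₁ ≠ blue₂)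
        (by norm_num [blue₁, blue₃]) (by norm_num [blue₂, blue₃]))
  simp only [reds, bmCost_three h₁₂ h₁₃ h₂₃, h₁₂.symm, h₁₃.symm, h₂₃.symm, if_true,
    if_false] at hbest
  have hperm : Set.BijOn f {red₁, red₂, red₃} {blue₁, blue₂, blue₃} := by
    simpa only [reds, blues, Finset.coe_insert, Finset.coe_singleton] using hbij
  have s5 : √5 < 2.24 := (Real.sqrt_lt' (by norm_num)).mpr (by norm_num)
  have s13 : √13 < 3.61 := (Real.sqrt_lt' (by norm_num)).mpr (by norm_num)
  have s17 : (4.12 : ℝ) < √17 := (Real.lt_sqrt (by norm_num)).mpr (by norm_num)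
  have s37 : √37 < 6.09 := (Real.sqrt_lt' (by norm_num)).mpr (by norm_num)
  have s41 : (6.4 : ℝ) < √41 := (Real.lt_sqrt (by norm_num)).mpr (by norm_num)
  rcases hperm.perm_three h₁₂ h₁₃ h₂₃ with he | ⟨e₁, e₂, e₃⟩ | ⟨e₁, e₂, e₃⟩ |
      ⟨e₁, e₂, e₃⟩ | ⟨e₁, e₂, e₃⟩ | ⟨e₁, e₂, e₃⟩
  · exact he
  all_goals
    rw [e₁, e₂, e₃] at hbest
    norm_num [red₁, red₂, red₃, blue₁, blue₂, blue₃, dist_toLp_pair] at hbest <;> linarith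

theorem disk_inter_disk_inter_disk_eq_empty :
    disk red₁ blue₁ ∩ disk red₂ blue₂ ∩ disk red₃ blue₃ = ∅ := by
  refine Set.eq_empty_of_forall_notMem fun x ⟨⟨h₁, h₂⟩, h₃⟩ => ?_
  simp only [mem_disk_iff_inner_nonpos, red₁, red₂, red₃, blue₁, blue₂, blue₃, PiLp.inner_apply,
    Fin.sum_univ_two] at h₁ h₂ h₃
  norm_num at h₁ h₂ h₃
  nlinarith [sq_nonneg (x 0 + 1 / 3), sq_nonneg (x 1 - 5 / 6)]

/-- There are disjoint 3-point sets R and B such that for every max-sum bichromatic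
matching, the three disks of the matching have empty intersection. -/
theorem stmt2 :
    ∃ R B : Finset Pt, Disjoint R B ∧ R.card = 3 ∧ B.card = 3 ∧
      ∀ f : Pt → Pt, IsMaxSumBichromatic R B f →
        (⋂ p ∈ (R : Set Pt), disk p (f p)) = ∅ := by
  refine ⟨reds, blues, disjoint_reds_blues, card_reds, card_blues, fun f hf => ?_⟩
  obtain ⟨h₁, h₂, h₃⟩ := eq_of_isMaxSumBichromatic hf
  rw [reds, Finset.coe_insert, Finset.coe_pair, Set.biInter_insert, Set.biInter_pair, h₁, h₂, h₃,
    ← Set.inter_assoc]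
  exact disk_inter_disk_inter_disk_eq_empty
end
end

section
/- Let p and q be two points of the plane and let r_{pq} = ‖p−q‖/2 be the radius of the disk D_{pq}. Let D be a second closed disk with center o and radius r ≤ r_{pq} such that D ∩ D_{pq} ≠ ∅. Then ‖p−o‖ + ‖q−o‖ ≤ √5 · ‖p−q‖. -/
noncomputable section

/-!
By Apollonius' theorem, `‖p-o‖² + ‖q-o‖² = 2‖o-m‖² + ‖p-q‖²/2` for the midpoint `m` of `pq`, and
`(a + b)² ≤ 2(a² + b²)` turns this into `(‖p-o‖ + ‖q-o‖)² ≤ 4‖o-m‖² + ‖p-q‖²`. Since the two disks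
meet, `‖o-m‖ ≤ r + ‖p-q‖/2 ≤ ‖p-q‖`, so the right-hand side is at most `5‖p-q‖²`.
-/

section Apollonius

variable {V P : Type*} [NormedAddCommGroup V] [InnerProductSpace ℝ V] [MetricSpace P]
  [NormedAddTorsor V P]

theorem sq_dist_add_dist_le (o p q : P) :
    (dist p o + dist q o) ^ 2 ≤ 4 * dist o (midpoint ℝ p q) ^ 2 + dist p q ^ 2 :=
  calc (dist p o + dist q o) ^ 2
      ≤ 2 * (dist o p ^ 2 + dist o q ^ 2) := by rw [dist_comm p, dist_comm q]; exact add_sq_le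
    _ = 4 * dist o (midpoint ℝ p q) ^ 2 + dist p q ^ 2 := by
      rw [EuclideanGeometry.dist_sq_add_dist_sq_eq_two_mul_dist_midpoint_sq_add_half_dist_sq]
      ring

theorem dist_add_dist_le_sqrt_five_mul_of_dist_midpoint_le {o p q : P}
    (h : dist o (midpoint ℝ p q) ≤ dist p q) :
    dist p o + dist q o ≤ √5 * dist p q := by
  refine le_of_pow_le_pow_left₀ two_ne_zero (by positivity) ?_
  calc (dist p o + dist q o) ^ 2
      ≤ 4 * dist o (midpoint ℝ p q) ^ 2 + dist p q ^ 2 := sq_dist_add_dist_le o p q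
    _ ≤ 4 * dist p q ^ 2 + dist p q ^ 2 := by gcongr
    _ = (√5 * dist p q) ^ 2 := by rw [mul_pow, Real.sq_sqrt (by norm_num)]; ring

end Apollonius

/-- If a disk of center o and radius r ≤ ‖p-q‖/2 meets the disk with diameter pq,
then ‖p-o‖ + ‖q-o‖ ≤ √5 ‖p-q‖. -/
theorem stmt4 (p q o : Pt) (r : ℝ) (hr : r ≤ dist p q / 2)
    (hint : (Metric.closedBall o r ∩ disk p q).Nonempty) :
    dist p o + dist q o ≤ Real.sqrt 5 * dist p q := by
  have hom : dist o (midpoint ℝ p q) ≤ r + dist p q / 2 :=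
    Metric.dist_le_add_of_nonempty_closedBall_inter_closedBall hint
  exact dist_add_dist_le_sqrt_five_mul_of_dist_midpoint_le (by linarith)
end
end

section
/- Let {a,b,c,d} be four points in the plane such that {(a,b),(c,d)} is a max-sum matching of {a,b,c,d} (that is, ‖a−b‖+‖c−d‖ ≥ ‖a−c‖+‖b−d‖ and ‖a−b‖+‖c−d‖ ≥ ‖a−d‖+‖b−c‖), and such that d belongs to the interior of the triangle with vertices a, b, c. Then d belongs to the interior of the disk D_{ab}, i.e., ‖d − (a+b)/2‖ < ‖a−b‖/2. -/
noncomputable section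

/-!
Put `u = a - d`, `v = b - d`, `w = c - d`. As `d` is inside the triangle, `α u + β v + γ w = 0`
with positive weights, so the unit vector `f = -w / ‖w‖` lies in the cone spanned by `u` and `v`.
Suppose `⟪u, v⟫ ≥ 0`, i.e. `d` is outside the open disk. By Cauchy–Schwarz
`‖a - c‖ - ‖c - d‖ ≥ ⟪u, f⟫` and `‖b - c‖ - ‖c - d‖ ≥ ⟪v, f⟫`, so the matching inequalities give
`⟪u, f⟫ ≤ ‖a - b‖ - ‖v‖` and `⟪v, f⟫ ≤ ‖a - b‖ - ‖u‖`. Since `f` lies between `u` and `v`, its inner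
product with the bisector `‖v‖ u + ‖u‖ v` is at least `‖u‖ ‖v‖ + ⟪u, v⟫`; adding the two bounds
with weights `‖v‖` and `‖u‖` then gives `(‖u‖ + ‖v‖) ‖u - v‖ ≥ ‖u‖² + ‖v‖² + ‖u‖ ‖v‖ + ⟪u, v⟫`,
which fails as soon as `⟪u, v⟫ ≥ 0`.
-/

open scoped RealInnerProductSpace

theorem exists_barycentric_of_mem_interior_convexHull {V : Type*} [NormedAddCommGroup V]
    [NormedSpace ℝ V] (hV : Module.finrank ℝ V = 2) {a b c d : V}
    (hd : d ∈ interior (convexHull ℝ {a, b, c})) :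
    ∃ α β γ : ℝ, 0 < α ∧ 0 < β ∧ 0 < γ ∧ α + β + γ = 1 ∧ α • a + β • b + γ • c = d ∧
      d ≠ a ∧ d ≠ b ∧ d ≠ c := by
  have : FiniteDimensional ℝ V := Module.finite_of_finrank_eq_succ hV
  have hrange : Set.range ![a, b, c] = {a, b, c} := by
    simp only [Matrix.range_cons, Matrix.range_empty, Set.union_empty, Set.singleton_union]
  have hspan : affineSpan ℝ (Set.range ![a, b, c]) = ⊤ := by
    rw [hrange, ← affineSpan_convexHull]
    exact (convex_convexHull ℝ _).interior_nonempty_iff_affineSpan_eq_top.mp ⟨d, hd⟩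
  have hind : AffineIndependent ℝ ![a, b, c] := by
    rw [affineIndependent_iff_le_finrank_vectorSpan ℝ _ (n := 2) rfl,
      AffineSubspace.vectorSpan_eq_top_of_affineSpan_eq_top ℝ V V hspan, finrank_top, hV]
  let bs : AffineBasis (Fin 3) ℝ V := ⟨![a, b, c], hind, hspan⟩
  have hpos : ∀ i, 0 < bs.coord i d := by
    have h := bs.interior_convexHull
    rw [show Set.range bs = {a, b, c} from hrange] at h
    rwa [h] at hd
  have hne {i j : Fin 3} (hij : i ≠ j) : d ≠ bs j := fun h =>
    (hpos i).ne' (h ▸ bs.coord_apply_ne hij)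
  refine ⟨bs.coord 0 d, bs.coord 1 d, bs.coord 2 d, hpos 0, hpos 1, hpos 2, ?_, ?_,
    hne (by decide : (1 : Fin 3) ≠ 0), hne (by decide : (0 : Fin 3) ≠ 1),
    hne (by decide : (0 : Fin 3) ≠ 2)⟩
  · simpa only [Fin.sum_univ_three] using bs.sum_coord_apply_eq_one d
  · have h := bs.linear_combination_coord_eq_self d
    rwa [Fin.sum_univ_three] at h

section InnerProductSpace

variable {V : Type*} [NormedAddCommGroup V] [InnerProductSpace ℝ V]

theorem dist_midpoint_lt_half_dist_of_inner_neg {a b d : V} (h : ⟪a - d, b - d⟫ < 0) :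
    dist d (midpoint ℝ a b) < dist a b / 2 := by
  have hmid : 2 * dist d (midpoint ℝ a b) = ‖(a - d) + (b - d)‖ := by
    rw [dist_comm, dist_eq_norm, ← Real.norm_two, ← norm_smul, midpoint_eq_smul_add, invOf_eq_inv]
    congr 1
    module
  have hab : dist a b = ‖(a - d) - (b - d)‖ := by rw [dist_eq_norm, sub_sub_sub_cancel_right]
  have hsq : ‖(a - d) + (b - d)‖ ^ 2 < ‖(a - d) - (b - d)‖ ^ 2 := by
    rw [norm_add_sq_real (a - d), norm_sub_sq_real (a - d)]
    linarith
  linarith [lt_of_pow_lt_pow_left₀ 2 (norm_nonneg _) hsq]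

theorem neg_inner_le_norm_mul_norm_sub_sub (u w : V) :
    -⟪w, u⟫ ≤ ‖w‖ * (‖u - w‖ - ‖w‖) := by
  have := real_inner_le_norm w (w - u)
  rw [inner_sub_right, real_inner_self_eq_norm_sq, norm_sub_rev] at this
  linarith

theorem norm_smul_add_smul_mul_le_inner_bisector (u v : V) {α β : ℝ} (hα : 0 ≤ α) (hβ : 0 ≤ β) :
    ‖α • u + β • v‖ * (‖u‖ * ‖v‖ + ⟪u, v⟫) ≤ ⟪α • u + β • v, ‖v‖ • u + ‖u‖ • v⟫ := by
  have hexpand : ⟪α • u + β • v, ‖v‖ • u + ‖u‖ • v⟫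
      = (α * ‖u‖ + β * ‖v‖) * (‖u‖ * ‖v‖ + ⟪u, v⟫) := by
    simp only [inner_add_left, inner_add_right, real_inner_smul_left, real_inner_smul_right,
      real_inner_self_eq_norm_sq, real_inner_comm u v]
    ring
  have hnorm : ‖α • u + β • v‖ ≤ α * ‖u‖ + β * ‖v‖ := by
    refine (norm_add_le _ _).trans_eq ?_
    rw [norm_smul, norm_smul, Real.norm_of_nonneg hα, Real.norm_of_nonneg hβ]
  have hbisector_nonneg : 0 ≤ ‖u‖ * ‖v‖ + ⟪u, v⟫ := by
    linarith [neg_le_of_abs_le (abs_real_inner_le_norm u v)]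
  rw [hexpand]
  exact mul_le_mul_of_nonneg_right hnorm hbisector_nonneg

theorem add_norm_mul_norm_sub_lt {u v : V} (hu : u ≠ 0) (hv : v ≠ 0) (huv : 0 ≤ ⟪u, v⟫) :
    (‖u‖ + ‖v‖) * ‖u - v‖ < ‖u‖ ^ 2 + ‖v‖ ^ 2 + ‖u‖ * ‖v‖ + ⟪u, v⟫ := by
  have hx := norm_pos_iff.mpr hu
  have hy := norm_pos_iff.mpr hv
  refine lt_of_pow_lt_pow_left₀ 2 (by positivity) ?_
  rw [mul_pow, norm_sub_sq_real]
  nlinarith [mul_pos (mul_pos hx hx) (mul_pos hy hy), mul_nonneg huv (sq_nonneg (‖u‖ + ‖v‖)),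
    sq_nonneg ⟪u, v⟫, mul_nonneg huv (mul_pos hx hy).le]

theorem inner_neg_of_smul_add_smul_add_smul_eq_zero {u v w : V} {α β γ : ℝ} (hα : 0 < α)
    (hβ : 0 ≤ β) (hγ : 0 < γ) (hcomb : α • u + β • v + γ • w = 0) (hu : u ≠ 0) (hv : v ≠ 0)
    (h1 : ‖u - w‖ + ‖v‖ ≤ ‖u - v‖ + ‖w‖) (h2 : ‖v - w‖ + ‖u‖ ≤ ‖u - v‖ + ‖w‖) :
    ⟪u, v⟫ < 0 := by
  by_contra! huv
  set s := α • u + β • v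
  have hw : γ • w = -s := eq_neg_of_add_eq_zero_right hcomb
  have hs : ‖s‖ = γ * ‖w‖ := by
    rw [← norm_neg s, ← hw, norm_smul, Real.norm_of_nonneg hγ.le]
  have key (z : V) : ⟪s, z⟫ ≤ ‖s‖ * (‖z - w‖ - ‖w‖) :=
    calc ⟪s, z⟫ = γ * -⟪w, z⟫ := by
          rw [← neg_neg s, ← hw, inner_neg_left, real_inner_smul_left, mul_neg]
      _ ≤ γ * (‖w‖ * (‖z - w‖ - ‖w‖)) :=
        mul_le_mul_of_nonneg_left (neg_inner_le_norm_mul_norm_sub_sub z w) hγ.le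
      _ = ‖s‖ * (‖z - w‖ - ‖w‖) := by rw [hs, mul_assoc]
  have hsu : ⟪s, u⟫ ≤ ‖s‖ * (‖u - v‖ - ‖v‖) :=
    (key u).trans (mul_le_mul_of_nonneg_left (by linarith) (norm_nonneg s))
  have hsv : ⟪s, v⟫ ≤ ‖s‖ * (‖u - v‖ - ‖u‖) :=
    (key v).trans (mul_le_mul_of_nonneg_left (by linarith) (norm_nonneg s))
  have hs_pos : 0 < ‖s‖ := by
    have hsu_pos : 0 < ⟪s, u⟫ := by
      simp only [s, inner_add_left, real_inner_smul_left, real_inner_self_eq_norm_sq,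
        real_inner_comm u v]
      have := norm_pos_iff.mpr hu
      positivity
    exact norm_pos_iff.mpr fun h => by simp [h] at hsu_pos
  have hbis : ‖s‖ * (‖u‖ * ‖v‖ + ⟪u, v⟫) ≤ ‖s‖ * ((‖u‖ + ‖v‖) * ‖u - v‖ - ‖u‖ ^ 2 - ‖v‖ ^ 2) :=
    calc ‖s‖ * (‖u‖ * ‖v‖ + ⟪u, v⟫) ≤ ⟪s, ‖v‖ • u + ‖u‖ • v⟫ :=
          norm_smul_add_smul_mul_le_inner_bisector u v hα.le hβ
      _ = ‖v‖ * ⟪s, u⟫ + ‖u‖ * ⟪s, v⟫ := by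
          rw [inner_add_right, real_inner_smul_right, real_inner_smul_right]
      _ ≤ ‖v‖ * (‖s‖ * (‖u - v‖ - ‖v‖)) + ‖u‖ * (‖s‖ * (‖u - v‖ - ‖u‖)) := by gcongr
      _ = _ := by ring
  have hcontra := le_of_mul_le_mul_left hbis hs_pos
  linarith [add_norm_mul_norm_sub_lt hu hv huv]

theorem dist_midpoint_lt_half_dist_of_maxSum {a b c d : V} {α β γ : ℝ} (hα : 0 < α) (hβ : 0 ≤ β)
    (hγ : 0 < γ) (hsum : α + β + γ = 1) (hd : α • a + β • b + γ • c = d) (had : d ≠ a)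
    (hbd : d ≠ b) (h1 : dist a c + dist b d ≤ dist a b + dist c d)
    (h2 : dist a d + dist b c ≤ dist a b + dist c d) :
    dist d (midpoint ℝ a b) < dist a b / 2 := by
  refine dist_midpoint_lt_half_dist_of_inner_neg <|
    inner_neg_of_smul_add_smul_add_smul_eq_zero (w := c - d) hα hβ hγ ?_
      (sub_ne_zero.2 had.symm) (sub_ne_zero.2 hbd.symm) ?_ ?_
  · linear_combination (norm := module) hd - hsum • d
  · simpa only [sub_sub_sub_cancel_right, ← dist_eq_norm] using h1
  · simp only [sub_sub_sub_cancel_right, ← dist_eq_norm]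
    linarith

end InnerProductSpace

/-- If {(a,b),(c,d)} is a max-sum matching of {a,b,c,d} and d lies in the interior of the
triangle abc, then d lies in the interior of the disk with diameter ab. -/
theorem stmt6 (a b c d : Pt)
    (h1 : dist a c + dist b d ≤ dist a b + dist c d)
    (h2 : dist a d + dist b c ≤ dist a b + dist c d)
    (hd : d ∈ interior (convexHull ℝ ({a, b, c} : Set Pt))) :
    dist d (midpoint ℝ a b) < dist a b / 2 := by
  obtain ⟨α, β, γ, hα, hβ, hγ, hsum, hcomb, had, hbd, -⟩ :=
    exists_barycentric_of_mem_interior_convexHull finrank_euclideanSpace_fin hd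
  exact dist_midpoint_lt_half_dist_of_maxSum hα hβ.le hγ hsum hcomb had hbd h1 h2
end
end

section
/- Let M = {(a_i,b_i) : i = 1,…,n} be a max-sum matching of a set P of 2n points in the plane, and let c ∉ P be a point such that b_1 belongs to the interior of the segment a_1c. Then M* = (M \ {(a_1,b_1)}) ∪ {(a_1,c)} is a max-sum matching of the point set (P \ {b_1}) ∪ {c}. -/
/-!
Moving the point `b₁` to `c` changes the length of every segment ending at it by at most
`d = ‖b₁ - c‖` (triangle inequality), so the cost of every matching grows by at most `2d`
(`matchCost` counts each pair in both orientations). Since `b₁` lies on the segment `a₁c`, the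
matching `M*` attains this bound, while `M` was already maximal before the move.
-/

noncomputable section

/-- A fixed-point-free involution of the index set: a perfect matching of the indices. -/
def IsPairing {m : ℕ} (σ : Equiv.Perm (Fin m)) : Prop := ∀ i, σ i ≠ i ∧ σ (σ i) = i

/-- Twice the total Euclidean length of the matching induced by the pairing `σ`. -/
def matchCost {m : ℕ} (x : Fin m → Pt) (σ : Equiv.Perm (Fin m)) : ℝ :=
  ∑ i, dist (x i) (x (σ i))

/-- The pairing `σ` is a max-sum matching of the points `x 0, …, x (m-1)`. -/
def IsMaxSumMatching {m : ℕ} (x : Fin m → Pt) (σ : Equiv.Perm (Fin m)) : Prop :=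
  IsPairing σ ∧ ∀ τ : Equiv.Perm (Fin m), IsPairing τ → matchCost x τ ≤ matchCost x σ

open Function

theorem sum_dist_update_self {ι α : Type*} [Fintype ι] [DecidableEq ι] [PseudoMetricSpace α]
    (x : ι → α) (j : ι) (c : α) : ∑ i, dist (update x j c i) (x i) = dist c (x j) := by
  rw [Finset.sum_eq_single j (fun i _ hi => by simp [hi]) (by simp), update_self]

section Update

variable {m : ℕ} (x : Fin m → Pt) (j : Fin m) (c : Pt)

theorem sum_add_dist_update_self_add (τ : Equiv.Perm (Fin m)) (a : Fin m → ℝ) :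
    ∑ i, (a i + dist (update x j c i) (x i) + dist (update x j c (τ i)) (x (τ i))) =
      ∑ i, a i + 2 * dist c (x j) := by
  rw [Finset.sum_add_distrib, Finset.sum_add_distrib,
    Equiv.sum_comp τ (fun i => dist (update x j c i) (x i)), sum_dist_update_self]
  ring

theorem matchCost_update_le (τ : Equiv.Perm (Fin m)) :
    matchCost (update x j c) τ ≤ matchCost x τ + 2 * dist c (x j) := by
  rw [matchCost, matchCost, ← sum_add_dist_update_self_add x j c τ]
  refine Finset.sum_le_sum fun i _ => ?_
  calc dist (update x j c i) (update x j c (τ i))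
      ≤ dist (update x j c i) (x i) + dist (x i) (x (τ i)) +
          dist (x (τ i)) (update x j c (τ i)) := dist_triangle4 _ _ _ _
    _ = _ := by rw [dist_comm (x (τ i))]; ring

theorem matchCost_update_of_mem_segment {σ : Equiv.Perm (Fin m)} (hσ : IsPairing σ) (i₀ : Fin m)
    (hb : x (σ i₀) ∈ segment ℝ (x i₀) c) :
    matchCost (update x (σ i₀) c) σ = matchCost x σ + 2 * dist c (x (σ i₀)) := by
  set j := σ i₀
  have hcol : dist (x i₀) (x j) + dist (x j) c = dist (x i₀) c :=
    dist_add_dist_of_mem_segment hb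
  have hσj : σ j = i₀ := (hσ i₀).2
  have hji : j ≠ i₀ := (hσ i₀).1
  rw [matchCost, matchCost, ← sum_add_dist_update_self_add x j c σ]
  refine Finset.sum_congr rfl fun i _ => ?_
  by_cases hi : i = j
  · subst hi
    simp only [hσj, update_self, update_of_ne hji.symm, dist_self]
    linarith [dist_comm c (x i₀), dist_comm (x j) (x i₀), dist_comm c (x j)]
  by_cases hσi : σ i = j
  · obtain rfl : i = i₀ := by rw [← hσj, ← hσi, (hσ i).2]
    simp only [hσi, update_self, update_of_ne hi, dist_self]
    linarith [dist_comm c (x j)]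
  · simp only [update_of_ne hi, update_of_ne hσi, dist_self, add_zero]

end Update

theorem stmt7_general (n : ℕ) (x : Fin (2 * n) → Pt) (σ : Equiv.Perm (Fin (2 * n)))
    (hmax : IsMaxSumMatching x σ) (i₀ : Fin (2 * n)) (c : Pt)
    (hb : x (σ i₀) ∈ openSegment ℝ (x i₀) c) :
    IsMaxSumMatching (Function.update x (σ i₀) c) σ := by
  refine ⟨hmax.1, fun τ hτ => ?_⟩
  rw [matchCost_update_of_mem_segment x c hmax.1 i₀ (openSegment_subset_segment ℝ _ _ hb)]
  calc matchCost (update x (σ i₀) c) τ ≤ matchCost x τ + 2 * dist c (x (σ i₀)) :=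
        matchCost_update_le x (σ i₀) c τ
    _ ≤ matchCost x σ + 2 * dist c (x (σ i₀)) := by linarith [hmax.2 τ hτ]

/-- Extending a segment of a max-sum matching beyond one of its endpoints yields a
max-sum matching of the new point set. -/
theorem stmt7 (n : ℕ) (x : Fin (2 * n) → Pt) (σ : Equiv.Perm (Fin (2 * n)))
    (hmax : IsMaxSumMatching x σ) (i₀ : Fin (2 * n)) (c : Pt)
    (hc : ∀ i, x i ≠ c) (hb : x (σ i₀) ∈ openSegment ℝ (x i₀) c) :
    IsMaxSumMatching (Function.update x (σ i₀) c) σ :=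
  stmt7_general n x σ hmax i₀ c hb
end
end

section
/- Let p, p', q, q' be four points of the plane such that the oriented segment from p to p' points to the segment qq', and q is to the right of the oriented line ℓ(p,p'). Let z be a point to the left of both ℓ(p,p') and ℓ(q,q') such that: (i) q is to the left of ℓ(z,p); (ii) the vectors p−z and p'−z are orthogonal, and the vectors q−z and q'−z are orthogonal. Then ‖p−z‖ − ‖q−z‖ < ‖p−q'‖ − ‖q−q'‖. -/
noncomputable section

/-- 2D cross product of two vectors. -/
def cross2 (u v : Pt) : ℝ := u 0 * v 1 - u 1 * v 0

/-- The oriented segment from `p` to `q` points to the segment `rs`: `q` lies in the interior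
of the triangle `p r s` and in the interior of the disk with diameter `rs`. -/
def pointsTo (p q r s : Pt) : Prop :=
  q ∈ interior (convexHull ℝ ({p, r, s} : Set Pt)) ∧ q ∈ interior (disk r s)

/-!
Translate `z` to the origin and put `u = q - z`, `w = q' - z`, `P = p - z`. Orthogonality makes
`p' - z` a positive multiple of `P` turned by a right angle, and Thales' theorem for the disk over
`qq'` gives `⟪p' - z, u + w⟫ ≥ ‖p' - z‖² > 0`; hence `P × (u + w) > 0`. Together with `P × u > 0`
and the orientation `(q - p) × (q' - p) > 0` forced by `p'` lying in the triangle `p q q'`, this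
places `P`, in the orthogonal frame spanned by `u` and `w`, in the region where
`‖P‖ - ‖u‖ < ‖P - w‖ - ‖u - w‖` can be checked by rationalising both differences of square roots.
-/

open RealInnerProductSpace

lemma Pt.inner_eq (a b : Pt) : ⟪a, b⟫ = a 0 * b 0 + a 1 * b 1 := by
  simp [PiLp.inner_apply, Fin.sum_univ_two, mul_comm]

lemma Pt.norm_sq_eq (a : Pt) : ‖a‖ ^ 2 = a 0 ^ 2 + a 1 ^ 2 := by
  simp [EuclideanSpace.real_norm_sq_eq, Fin.sum_univ_two]

lemma inner_sq_add_cross2_sq (a b : Pt) : ⟪a, b⟫ ^ 2 + cross2 a b ^ 2 = ‖a‖ ^ 2 * ‖b‖ ^ 2 := by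
  simp only [Pt.inner_eq, Pt.norm_sq_eq, cross2]; ring

lemma cross2_mul_norm_sq (a b c : Pt) :
    cross2 a c * ‖b‖ ^ 2 = ⟪a, b⟫ * cross2 b c + ⟪b, c⟫ * cross2 a b := by
  simp only [Pt.inner_eq, Pt.norm_sq_eq, cross2]; ring

lemma inner_mul_norm_sq (a b c : Pt) :
    ⟪b, c⟫ * ‖a‖ ^ 2 = cross2 a b * cross2 a c + ⟪a, b⟫ * ⟪a, c⟫ := by
  simp only [Pt.inner_eq, Pt.norm_sq_eq, cross2]; ring

lemma inner_sub_sub_nonpos_of_mem_disk {x a b : Pt} (h : x ∈ disk a b) :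
    ⟪x - a, x - b⟫ ≤ 0 := by
  have hx : dist x (midpoint ℝ a b) ≤ dist a b / 2 := h
  have hpol := real_inner_eq_norm_mul_self_add_norm_mul_self_sub_norm_sub_mul_self_div_two
    (x - a) (x - b)
  have hap := EuclideanGeometry.dist_sq_add_dist_sq_eq_two_mul_dist_midpoint_sq_add_half_dist_sq
    x a b
  rw [sub_sub_sub_cancel_left, ← dist_eq_norm, ← dist_eq_norm, ← dist_eq_norm,
    dist_comm b a] at hpol
  nlinarith [dist_nonneg (x := x) (y := midpoint ℝ a b)]

lemma inner_add_pos_of_mem_disk {x a b z : Pt} (h : x ∈ disk a b) (hab : ⟪a - z, b - z⟫ = 0)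
    (hx : x ≠ z) : 0 < ⟪x - z, (a - z) + (b - z)⟫ := by
  have hexpand (X A B : Pt) : ⟪X - A, X - B⟫ = ‖X‖ ^ 2 - ⟪X, A + B⟫ + ⟪A, B⟫ := by
    simp only [inner_sub_left, inner_sub_right, inner_add_right, real_inner_self_eq_norm_sq,
      real_inner_comm A]
    ring
  have := hexpand (x - z) (a - z) (b - z)
  rw [sub_sub_sub_cancel_right, sub_sub_sub_cancel_right, hab] at this
  nlinarith [inner_sub_sub_nonpos_of_mem_disk h, norm_pos_iff.mpr (sub_ne_zero.mpr hx)]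

lemma isLinearMap_cross2_left (b : Pt) : IsLinearMap ℝ (cross2 · b) where
  map_add x y := by simp only [cross2, PiLp.add_apply]; ring
  map_smul t x := by simp only [cross2, PiLp.smul_apply, smul_eq_mul]; ring

lemma cross2_sub_sub_pos_of_mem_convexHull {p q r x : Pt}
    (hx : x ∈ convexHull ℝ {p, q, r}) (hxq : cross2 (x - p) (q - p) < 0) :
    0 < cross2 (q - p) (r - p) := by
  by_contra! hqr
  let H : Set Pt := {y | cross2 p (q - p) ≤ cross2 y (q - p)}
  have hsub : convexHull ℝ {p, q, r} ⊆ H := by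
    refine convexHull_min ?_ (convex_halfSpace_ge (isLinearMap_cross2_left _) _)
    simp only [Set.insert_subset_iff, Set.singleton_subset_iff, H, Set.mem_ofPred_eq]
    refine ⟨le_rfl, ?_, ?_⟩ <;> simp only [cross2, PiLp.sub_apply] at hqr ⊢ <;> nlinarith
  have := hsub hx
  simp only [H, Set.mem_ofPred_eq, cross2, PiLp.sub_apply] at this hxq
  linarith

lemma sub_lt_sub_of_sq_eq {x b c d A B C : ℝ} (hb : 0 < b) (hc : 0 < c) (hd : 0 < d)
    (hA : 0 ≤ A) (hB : 0 ≤ B) (hC : 0 ≤ C)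
    (hA2 : A ^ 2 = x ^ 2 + (b + d) ^ 2) (hB2 : B ^ 2 = x ^ 2 + b ^ 2) (hC2 : C ^ 2 = c ^ 2 + d ^ 2)
    (hlow : -(b * c) < x * d) (hupp : x * d < c * (b + d)) :
    B - c < A - C := by
  have hx2 : d ^ 2 * x ^ 2 < c ^ 2 * (b + d) ^ 2 := by nlinarith [mul_pos hc hd, mul_pos hb hc]
  have hAC : d * A < (b + d) * C :=
    lt_of_pow_lt_pow_left₀ 2 (by positivity) (by nlinarith)
  have hBC : d * B < b * C + 2 * b * c + c * d :=
    lt_of_pow_lt_pow_left₀ 2 (by positivity) (by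
      nlinarith [mul_pos hb hc, mul_pos hc hd, mul_nonneg (mul_pos hb hb).le (mul_nonneg hc.le hC),
        mul_nonneg (mul_pos hb hc).le (mul_nonneg hd.le hC)])
  have hAB : 0 < A + B := by nlinarith
  have hCc : 0 < C + c := by linarith
  have hAB_sq : (A - B) * (A + B) = 2 * b * d + d ^ 2 := by linear_combination hA2 - hB2
  have hCc_sq : (C - c) * (C + c) = d ^ 2 := by linear_combination hC2
  have key : (C - c) * ((A + B) * (C + c)) < (A - B) * ((A + B) * (C + c)) := by nlinarith
  linarith [lt_of_mul_lt_mul_right key (mul_pos hAB hCc).le]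

lemma norm_sub_norm_lt_of_cross2_pos {P u w : Pt} (huw : ⟪u, w⟫ = 0) (hu_w : 0 < cross2 u w)
    (hP_u : 0 < cross2 P u) (hP_uw : 0 < cross2 P (u + w)) (htri : 0 < cross2 (u - P) (w - P)) :
    ‖P‖ - ‖u‖ < ‖P - w‖ - ‖u - w‖ := by
  have hu : 0 < ‖u‖ := norm_pos_iff.mpr (by rintro rfl; simp [cross2] at hu_w)
  have hwu : ⟪w, u⟫ = 0 := by rwa [real_inner_comm]
  have hsum : cross2 P (u + w) = cross2 P u + cross2 P w := by
    simp only [cross2, PiLp.add_apply]; ring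
  have htri' : cross2 (u - P) (w - P) = cross2 u w + cross2 P u - cross2 P w := by
    simp only [cross2, PiLp.sub_apply]; ring
  have hxd : ⟪P, u⟫ * cross2 u w = cross2 P w * ‖u‖ ^ 2 := by
    rw [cross2_mul_norm_sq, huw]; ring
  -- scaling by `‖u‖` turns every norm into a polynomial in `⟪P, u⟫`, `cross2 P u`, `cross2 u w`
  suffices ‖u‖ * ‖P‖ - ‖u‖ ^ 2 < ‖u‖ * ‖P - w‖ - ‖u‖ * ‖u - w‖ by nlinarith
  refine sub_lt_sub_of_sq_eq (x := ⟪P, u⟫) (b := cross2 P u) (d := cross2 u w) hP_u (by positivity)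
    hu_w (by positivity) (by positivity) (by positivity) ?_ ?_ ?_ ?_ ?_
  · rw [mul_pow, mul_comm, ← inner_sq_add_cross2_sq, inner_sub_left, hwu, sub_zero]
    simp only [cross2, PiLp.sub_apply]; ring
  · rw [mul_pow, mul_comm, ← inner_sq_add_cross2_sq]
  · rw [mul_pow, mul_comm, ← inner_sq_add_cross2_sq, inner_sub_left, hwu, sub_zero,
      real_inner_self_eq_norm_sq]
    simp only [cross2, PiLp.sub_apply]; ring
  · rw [hxd]; nlinarith [mul_pos hP_uw (pow_pos hu 2)]
  · rw [hxd]; nlinarith [mul_pos htri (pow_pos hu 2)]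

lemma cross2_pos_of_inner_pos {P v y : Pt} (hPv : ⟪P, v⟫ = 0) (hcross : 0 < cross2 P v)
    (hvy : 0 < ⟪v, y⟫) : 0 < cross2 P y := by
  have hP : 0 < ‖P‖ := norm_pos_iff.mpr (by rintro rfl; simp [cross2] at hcross)
  have hid := inner_mul_norm_sq P v y
  rw [hPv, zero_mul, add_zero] at hid
  exact pos_of_mul_pos_right (hid ▸ mul_pos hvy (pow_pos hP 2)) hcross.le

/-- Lemma 6 of the paper. -/
theorem stmt8 (p p' q q' z : Pt)
    (hpt : pointsTo p p' q q')
    (hqr : cross2 (p' - p) (q - p) < 0)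
    (hz1 : 0 < cross2 (p' - p) (z - p))
    (hz2 : 0 < cross2 (q' - q) (z - q))
    (hql : 0 < cross2 (p - z) (q - z))
    (ho1 : inner ℝ (p - z) (p' - z) = (0 : ℝ))
    (ho2 : inner ℝ (q - z) (q' - z) = (0 : ℝ)) :
    dist p z - dist q z < dist p q' - dist q q' := by
  obtain ⟨hhull, hdisk⟩ := hpt
  have hpp' : 0 < cross2 (p - z) (p' - z) := by
    convert hz1 using 1; simp only [cross2, PiLp.sub_apply]; ring
  have hqq' : 0 < cross2 (q - z) (q' - z) := by
    convert hz2 using 1; simp only [cross2, PiLp.sub_apply]; ring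
  have hp'z : p' ≠ z := by rintro rfl; simp [cross2] at hpp'
  have hthales := inner_add_pos_of_mem_disk (interior_subset hdisk) ho2 hp'z
  have htri := cross2_sub_sub_pos_of_mem_convexHull (interior_subset hhull) hqr
  rw [← sub_sub_sub_cancel_right q p z, ← sub_sub_sub_cancel_right q' p z] at htri
  rw [dist_eq_norm, dist_eq_norm, dist_eq_norm, dist_eq_norm, ← sub_sub_sub_cancel_right p q' z,
    ← sub_sub_sub_cancel_right q q' z]
  exact norm_sub_norm_lt_of_cross2_pos ho2 hqq' hql (cross2_pos_of_inner_pos ho1 hpp' hthales) htri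
end
end

section
/- Let p, p', o be three points in the plane with o the midpoint of the segment pp'. Let z be a point of the circle centered at o with radius ‖p−p'‖/2 lying to the left of the oriented line ℓ(p,p'). Let q be a point of the segment zp' with q ≠ p', and let q' be a point of the ray from o through z that does not belong to the segment oz (i.e., q' = o + t(z−o) for some t > 1). Then ‖p−p'‖ + ‖q−q'‖ < ‖p−q‖ + ‖p'−q'‖. -/
noncomputable section

/-! By Thales the angle of the triangle `p z p'` at `z` is right. With legs `a = ‖p - z‖`,
`b = ‖p' - z‖`, `2r = ‖p - p'‖`, `q = z + s (p' - z)` and `q' = z + u (z - o)`, one computes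
`‖p - q‖² = a² + s²b²`, so `(2r)² - ‖p - q‖² = b²(1 - s)(1 + s)`, and
`‖p' - q'‖² - ‖q - q'‖² = b²(1 - s)(1 + s + u)`. Dividing these differences of squares by the
corresponding sums, `2r - ‖p - q‖ < ‖p' - q'‖ - ‖q - q'‖` reduces to
`(1 + s)(‖p' - q'‖ + ‖q - q'‖) < (1 + s + u)(2r + ‖p - q‖)`, which follows from the triangle
inequalities `‖q - q'‖ ≤ sb + ur`, `‖p' - q'‖ ≤ (2 + u)r` together with `sb < ‖p - q‖` and
`2sr ≤ ‖p - q‖`. -/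

open scoped RealInnerProductSpace

theorem sub_lt_sub_of_sq_sub_sq_eq_mul {a b c d k m n : ℝ} (hab : 0 < a + b) (hcd : 0 < c + d)
    (hk : 0 < k) (habk : a ^ 2 - b ^ 2 = k * m) (hcdk : c ^ 2 - d ^ 2 = k * n)
    (h : m * (c + d) < n * (a + b)) : a - b < c - d := by
  have hab' : a - b = k * m / (a + b) := by
    rw [eq_div_iff hab.ne']; linear_combination habk
  have hcd' : c - d = k * n / (c + d) := by
    rw [eq_div_iff hcd.ne']; linear_combination hcdk
  rw [hab', hcd', div_lt_div_iff₀ hab hcd]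
  nlinarith [mul_lt_mul_of_pos_left h hk]

theorem add_lt_add_of_right_triangle {a b r s u B C D : ℝ} (ha : 0 < a) (hb : 0 < b)
    (hr : 0 ≤ r) (hs₀ : 0 ≤ s) (hs₁ : s < 1) (hu : 0 ≤ u) (hB₀ : 0 ≤ B) (hC₀ : 0 ≤ C) (hD₀ : 0 ≤ D)
    (hab : a ^ 2 + b ^ 2 = (2 * r) ^ 2) (hC : C ^ 2 = a ^ 2 + s ^ 2 * b ^ 2)
    (hDB : D ^ 2 - B ^ 2 = b ^ 2 * (1 - s) * (1 + s + u))
    (hB : B ≤ s * b + u * r) (hD : D ≤ 2 * r + u * r) :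
    2 * r + B < C + D := by
  have hk : 0 < b ^ 2 * (1 - s) := mul_pos (by positivity) (by linarith)
  have hsb : s * b < C := lt_of_pow_lt_pow_left₀ 2 hC₀ (by nlinarith)
  have hsr : 2 * s * r ≤ C := le_of_pow_le_pow_left₀ two_ne_zero hC₀
    (by nlinarith [mul_le_mul_of_nonneg_left (pow_le_one₀ hs₀ hs₁.le : s ^ 2 ≤ 1) (sq_nonneg a)])
  have hBD : B < D := lt_of_pow_lt_pow_left₀ 2 hD₀ (by nlinarith)
  have hm : (1 + s) * (D + B) < (1 + s + u) * (2 * r + C) :=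
    calc (1 + s) * (D + B) ≤ (1 + s) * (2 * r + s * b + 2 * (u * r)) :=
          mul_le_mul_of_nonneg_left (by linarith) (by linarith)
      _ < (1 + s) * (2 * r + C + 2 * (u * r)) := mul_lt_mul_of_pos_left (by linarith) (by linarith)
      _ ≤ (1 + s + u) * (2 * r + C) := by nlinarith [mul_nonneg hu (sub_nonneg.mpr hsr)]
  have := sub_lt_sub_of_sq_sub_sq_eq_mul (by linarith [mul_nonneg hs₀ hb.le]) (by linarith) hk
    (by linear_combination -hab - hC) (by linear_combination hDB) hm
  linarith

section InnerProductSpace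

variable {V : Type*} [NormedAddCommGroup V] [InnerProductSpace ℝ V]

theorem inner_sub_sub_eq_zero_of_dist_midpoint {p p' z : V}
    (hz : dist z (midpoint ℝ p p') = dist p p' / 2) : ⟪p - z, p' - z⟫ = 0 := by
  have hmem : z ∈ EuclideanGeometry.Sphere.ofDiameter p p' := EuclideanGeometry.mem_sphere.mpr hz
  have hangle := EuclideanGeometry.Sphere.angle_eq_pi_div_two_iff_mem_sphere_ofDiameter.mpr hmem
  exact (InnerProductGeometry.inner_eq_zero_iff_angle_eq_pi_div_two _ _).mpr hangle

theorem norm_sub_add_norm_sub_lt_of_inner_eq_zero {F E : V} (hF : F ≠ 0) (hE : E ≠ 0)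
    (hFE : ⟪F, E⟫ = 0) {s u : ℝ} (hs₀ : 0 ≤ s) (hs₁ : s < 1) (hu : 0 ≤ u) :
    ‖F - E‖ + ‖s • E - u • (-(2⁻¹ : ℝ) • (F + E))‖ <
      ‖F - s • E‖ + ‖E - u • (-(2⁻¹ : ℝ) • (F + E))‖ := by
  set M := -(2⁻¹ : ℝ) • (F + E) with hM
  clear_value M
  have hMr : ‖M‖ = ‖F - E‖ / 2 := by
    rw [hM, norm_smul, add_comm, ← norm_sub_eq_norm_add hFE, norm_sub_rev]; norm_num; ring
  have hEM : ⟪E, M⟫ = -‖E‖ ^ 2 / 2 := by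
    rw [hM, real_inner_smul_right, inner_add_right, real_inner_comm, hFE,
      real_inner_self_eq_norm_sq]
    ring
  have hab : ‖F‖ ^ 2 + ‖E‖ ^ 2 = (2 * (‖F - E‖ / 2)) ^ 2 := by
    rw [mul_div_cancel₀ _ two_ne_zero, norm_sub_sq_real, hFE]
    ring
  have hC : ‖F - s • E‖ ^ 2 = ‖F‖ ^ 2 + s ^ 2 * ‖E‖ ^ 2 := by
    rw [norm_sub_sq_real, real_inner_smul_right, hFE, norm_smul, mul_pow, Real.norm_eq_abs, sq_abs]
    ring
  have hDB : ‖E - u • M‖ ^ 2 - ‖s • E - u • M‖ ^ 2 = ‖E‖ ^ 2 * (1 - s) * (1 + s + u) := by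
    rw [norm_sub_sq_real, norm_sub_sq_real, real_inner_smul_left, real_inner_smul_right, hEM,
      norm_smul, norm_smul, Real.norm_of_nonneg hs₀, Real.norm_of_nonneg hu]
    ring
  have hB : ‖s • E - u • M‖ ≤ s * ‖E‖ + u * (‖F - E‖ / 2) := by
    refine (norm_sub_le _ _).trans_eq ?_
    rw [norm_smul, norm_smul, hMr, Real.norm_of_nonneg hs₀, Real.norm_of_nonneg hu]
  have hD : ‖E - u • M‖ ≤ 2 * (‖F - E‖ / 2) + u * (‖F - E‖ / 2) := by
    -- this is `p' - q' = (p' - o) - (1 + u) • (z - o)`, both vectors on the right of length `r`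
    have hsplit : E - u • M = (2⁻¹ : ℝ) • (E - F) - (1 + u) • M := by rw [hM]; module
    rw [hsplit]
    refine (norm_sub_le _ _).trans_eq ?_
    rw [norm_smul, norm_smul, hMr, norm_sub_rev,
      Real.norm_of_nonneg (by linarith : (0 : ℝ) ≤ 1 + u)]
    norm_num
    ring
  have := add_lt_add_of_right_triangle (norm_pos_iff.mpr hF) (norm_pos_iff.mpr hE) (by positivity)
    hs₀ hs₁ hu (norm_nonneg _) (norm_nonneg _) (norm_nonneg _) hab hC hDB hB hD
  linarith

theorem dist_add_dist_lt_of_dist_midpoint_eq {p p' z q q' : V}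
    (hz : dist z (midpoint ℝ p p') = dist p p' / 2) (hzp : z ≠ p) (hzp' : z ≠ p')
    {s u : ℝ} (hs₀ : 0 ≤ s) (hs₁ : s < 1) (hu : 0 ≤ u)
    (hq : q = z + s • (p' - z)) (hq' : q' = z + u • (z - midpoint ℝ p p')) :
    dist p p' + dist q q' < dist p q + dist p' q' := by
  have hM : z - midpoint ℝ p p' = -(2⁻¹ : ℝ) • ((p - z) + (p' - z)) := by
    rw [midpoint_eq_smul_add, invOf_eq_inv]; module
  have := norm_sub_add_norm_sub_lt_of_inner_eq_zero (sub_ne_zero.mpr hzp.symm)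
    (sub_ne_zero.mpr hzp'.symm) (inner_sub_sub_eq_zero_of_dist_midpoint hz) hs₀ hs₁ hu
  rw [← hM] at this
  have hpp' : p - p' = (p - z) - (p' - z) := by abel
  have hqq' : q - q' = s • (p' - z) - u • (z - midpoint ℝ p p') := by rw [hq, hq']; abel
  have hpq : p - q = (p - z) - s • (p' - z) := by rw [hq]; abel
  have hp'q' : p' - q' = (p' - z) - u • (z - midpoint ℝ p p') := by rw [hq']; abel
  simpa only [dist_eq_norm, hpp', hqq', hpq, hp'q'] using this

end InnerProductSpace

/-- Lemma 11 of the paper. -/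
theorem stmt13 (p p' o z q q' : Pt) (ho : o = midpoint ℝ p p')
    (hz : dist z o = dist p p' / 2) (hzl : 0 < cross2 (p' - p) (z - p))
    (hq : q ∈ segment ℝ z p') (hqne : q ≠ p')
    (t : ℝ) (ht : 1 < t) (hq' : q' = o + t • (z - o)) :
    dist p p' + dist q q' < dist p q + dist p' q' := by
  subst ho
  have hzp : z ≠ p := by rintro rfl; simp [cross2] at hzl
  rw [segment_eq_image'] at hq
  obtain ⟨s, ⟨hs₀, hs₁⟩, rfl⟩ := hq
  have hzp' : z ≠ p' := by rintro rfl; simp at hqne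
  have hs : s < 1 := hs₁.lt_of_ne (by rintro rfl; simp at hqne)
  exact dist_add_dist_lt_of_dist_midpoint_eq hz hzp hzp' hs₀ hs (u := t - 1) (by linarith) rfl
    (by rw [hq']; module)
end
end

section
/- Let A, B, C be the vertices of a nondegenerate triangle in the plane and let E be a point of the side AB such that the line through C and E bisects the interior angle of the triangle at C. Then ‖C−B‖ > ‖B−E‖. -/
/-!
By the angle bisector theorem, `E` divides `AB` in the ratio `EA : EB = CA : CB`, so
`BE = AB · CB / (CA + CB)`. In a nondegenerate triangle the triangle inequality `AB < CA + CB` is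
strict, hence `BE < CB`.
-/

noncomputable section

open InnerProductGeometry
open scoped InnerProductSpace

section

variable {V : Type*} [NormedAddCommGroup V] [InnerProductSpace ℝ V]

theorem inner_lt_norm_mul_norm_of_not_collinear {A B C : V}
    (h : ¬Collinear ℝ ({A, C, B} : Set V)) : ⟪A - C, B - C⟫_ℝ < ‖A - C‖ * ‖B - C‖ := by
  refine (real_inner_le_norm _ _).lt_of_ne fun heq =>
    EuclideanGeometry.angle_ne_zero_of_not_collinear h ?_
  exact (inner_eq_mul_norm_iff_angle_eq_zero (sub_ne_zero.2 (ne₁₂_of_not_collinear h))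
    (sub_ne_zero.2 (ne₂₃_of_not_collinear h).symm)).1 heq

theorem mul_norm_eq_mul_norm_of_angle_eq {u v : V} {p q : ℝ} (huv : ⟪u, v⟫_ℝ < ‖u‖ * ‖v‖)
    (hw : p • u + q • v ≠ 0) (h : angle (p • u + q • v) u = angle (p • u + q • v) v) :
    p * ‖u‖ = q * ‖v‖ := by
  have hu : u ≠ 0 := by rintro rfl; simp at huv
  have hv : v ≠ 0 := by rintro rfl; simp at huv
  have hcos := congrArg Real.cos h
  rw [cos_angle, cos_angle, div_eq_div_iff (by positivity) (by positivity)] at hcos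
  simp only [inner_add_left, real_inner_smul_left, real_inner_self_eq_norm_sq,
    real_inner_comm u v] at hcos
  -- the second factor is positive by the strict Cauchy–Schwarz inequality `huv`
  have hfac : ‖p • u + q • v‖ * ((p * ‖u‖ - q * ‖v‖) * (‖u‖ * ‖v‖ - ⟪u, v⟫_ℝ)) = 0 := by
    linear_combination hcos
  rcases mul_eq_zero.1 hfac with h0 | h0
  · exact absurd (norm_eq_zero.1 h0) hw
  · rcases mul_eq_zero.1 h0 with h1 | h1 <;> linarith

theorem mul_dist_eq_mul_dist_of_angle_eq {A B C : V} {p q : ℝ}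
    (h : ¬Collinear ℝ ({A, C, B} : Set V)) (hpq : p + q = 1)
    (hbis : angle (p • A + q • B - C) (A - C) = angle (p • A + q • B - C) (B - C)) :
    p * dist A C = q * dist B C := by
  have hsplit : p • A + q • B - C = p • (A - C) + q • (B - C) := by
    linear_combination (norm := module) hpq • C
  have hline : p • A + q • B = AffineMap.lineMap A B q := by
    rw [AffineMap.lineMap_apply_module, ← hpq, add_sub_cancel_right]
  have hEC : p • A + q • B - C ≠ 0 := by
    intro hC
    rw [sub_eq_zero, hline] at hC
    refine h ?_
    rw [Set.insert_comm]
    exact collinear_insert_of_mem_affineSpan_pair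
      (hC ▸ AffineMap.lineMap_mem_affineSpan_pair q A B)
  rw [hsplit] at hbis hEC
  rw [dist_eq_norm, dist_eq_norm]
  exact mul_norm_eq_mul_norm_of_angle_eq (inner_lt_norm_mul_norm_of_not_collinear h) hEC hbis

end

/-- In a nondegenerate triangle ABC, if CE is the interior angle bisector at C
with E on side AB, then ‖C-B‖ > ‖B-E‖. -/
theorem stmt15 (A B C E : Pt) (hnd : ¬ Collinear ℝ ({A, B, C} : Set Pt))
    (hE : E ∈ segment ℝ A B)
    (hbis : InnerProductGeometry.angle (E - C) (A - C) =
      InnerProductGeometry.angle (E - C) (B - C)) :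
    dist B E < dist C B := by
  have hnd' : ¬Collinear ℝ ({A, C, B} : Set Pt) := by rwa [Set.pair_comm]
  obtain ⟨p, q, hp, -, hpq, rfl⟩ := hE
  have hbisector := mul_dist_eq_mul_dist_of_angle_eq hnd' hpq hbis
  have htri : dist A B < dist A C + dist C B :=
    dist_lt_dist_add_dist_iff.2 fun h => hnd' h.collinear
  have hp0 : 0 < p := by
    refine hp.lt_of_ne fun h => ne₂₃_of_not_collinear hnd' ?_
    have hq1 : q = 1 := by linarith
    rw [← h, hq1, zero_mul, one_mul, eq_comm, dist_eq_zero] at hbisector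
    exact hbisector.symm
  have hBE : dist B (p • A + q • B) = p * dist A B := by
    have hvec : B - (p • A + q • B) = p • (B - A) := by
      linear_combination (norm := module) (-hpq) • B
    rw [dist_eq_norm, hvec, norm_smul, Real.norm_of_nonneg hp, dist_eq_norm']
  calc dist B (p • A + q • B) = p * dist A B := hBE
    _ < p * (dist A C + dist C B) := mul_lt_mul_of_pos_left htri hp0
    _ = dist C B := by linear_combination hbisector - q * dist_comm C B + dist C B * hpq
end
end

section
/- For any set P of 2k points in the plane there exist a point o ∈ ℝ² and a partition of P into k pairs P_1, …, P_k such that, for every i ∈ {1,…,k}, the Euclidean distance from o to the segment joining the two points of P_i is at most (1/2)·diam(P_i), and hence at most (1/2)·diam(P), where diam denotes the diameter of a point set. -/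
/-!
Cut `P` into halves by a vertical line `x = a` (left half `L`) and by a horizontal line `y = b`
(lower half `B`), and let `o = (a, b)`. Counting gives `|L ∩ B| = |(P \ L) \ B|` and
`|L \ B| = |(P \ L) ∩ B|`, so every point of `L` can be paired with a point of `P \ L` lying
in the other horizontal half. The two points `p, q` of a pair then lie in opposite closed
quadrants around `o`, hence `⟪p - o, q - o⟫ ≤ 0`: by Thales, `o` lies in the disk with diameter
`pq`, i.e. within `|pq| / 2` of the midpoint of the segment.
-/

noncomputable section

open scoped InnerProductSpace

theorem EuclideanSpace.inner_sub_sub_nonpos {ι : Type*} [Fintype ι]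
    {o p q : EuclideanSpace ℝ ι}
    (h : ∀ j, (p j - o j) * (q j - o j) ≤ 0) : ⟪p - o, q - o⟫_ℝ ≤ 0 := by
  rw [PiLp.inner_apply]
  refine Finset.sum_nonpos fun j _ => ?_
  simpa [mul_comm] using h j

theorem dist_midpoint_le_of_inner_sub_sub_nonpos {E : Type*} [NormedAddCommGroup E]
    [InnerProductSpace ℝ E] {o p q : E} (h : ⟪p - o, q - o⟫_ℝ ≤ 0) :
    dist o (midpoint ℝ p q) ≤ dist p q / 2 := by
  have hmid : dist o (midpoint ℝ p q) = ‖(p - o) + (q - o)‖ / 2 := by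
    rw [dist_comm, dist_eq_norm, midpoint_eq_smul_add, invOf_eq_inv,
      show (2⁻¹ : ℝ) • (p + q) - o = (2⁻¹ : ℝ) • ((p - o) + (q - o)) by module, norm_smul]
    norm_num
    ring
  have hsq : ‖(p - o) + (q - o)‖ ^ 2 ≤ ‖(p - o) - (q - o)‖ ^ 2 := by
    rw [norm_add_sq_real (p - o), norm_sub_sq_real (p - o)]
    linarith
  rw [hmid, dist_eq_norm, ← sub_sub_sub_cancel_right p q o]
  gcongr
  exact (pow_le_pow_iff_left₀ (norm_nonneg _) (norm_nonneg _) two_ne_zero).mp hsq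

theorem infDist_segment_le_of_inner_sub_sub_nonpos {E : Type*} [NormedAddCommGroup E]
    [InnerProductSpace ℝ E] {o p q : E} (h : ⟪p - o, q - o⟫_ℝ ≤ 0) :
    Metric.infDist o (segment ℝ p q) ≤ dist p q / 2 :=
  (Metric.infDist_le_dist_of_mem (midpoint_mem_segment p q)).trans
    (dist_midpoint_le_of_inner_sub_sub_nonpos h)

theorem Finset.exists_subset_card_eq_separated {α β : Type*} [DecidableEq α] [LinearOrder β]
    [Inhabited β] (f : α → β) (P : Finset α) :
    ∀ k ≤ P.card, ∃ S ⊆ P, S.card = k ∧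
      ∃ t, (∀ p ∈ S, f p ≤ t) ∧ ∀ q ∈ P \ S, t ≤ f q := by
  induction P using Finset.induction_on_max_value f with
  | empty =>
    intro k hk
    exact ⟨∅, subset_refl _, by simp_all, default, by simp, by simp⟩
  | insert a s has hmax ih =>
    intro k hk
    rw [card_insert_of_notMem has] at hk
    rcases hk.lt_or_eq with hk | rfl
    · obtain ⟨S, hSs, hSk, t, hle, hge⟩ := ih k (by omega)
      refine ⟨S, hSs.trans (subset_insert a s), hSk, min t (f a),
        fun p hp => le_min (hle p hp) (hmax p (hSs hp)), fun q hq => ?_⟩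
      obtain ⟨hq, hqS⟩ := mem_sdiff.mp hq
      rcases mem_insert.mp hq with rfl | hqs
      · exact min_le_right _ _
      · exact (min_le_left _ _).trans (hge q (mem_sdiff.mpr ⟨hqs, hqS⟩))
    · refine ⟨insert a s, subset_refl _, card_insert_of_notMem has, f a, fun p hp => ?_, by simp⟩
      rcases mem_insert.mp hp with rfl | hps
      exacts [le_rfl, hmax p hps]

theorem mul_sub_nonpos_of_separated {α : Type*} [DecidableEq α] {f : α → ℝ} {t : ℝ}
    {P S : Finset α}
    (hle : ∀ p ∈ S, f p ≤ t) (hge : ∀ q ∈ P \ S, t ≤ f q) {u v : α} (hu : u ∈ P) (hv : v ∈ P)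
    (huv : u ∈ S ↔ v ∉ S) : (f u - t) * (f v - t) ≤ 0 := by
  by_cases huS : u ∈ S
  · exact mul_nonpos_of_nonpos_of_nonneg (sub_nonpos.mpr (hle u huS))
      (sub_nonneg.mpr (hge v (Finset.mem_sdiff.mpr ⟨hv, huv.mp huS⟩)))
  · exact mul_nonpos_of_nonneg_of_nonpos
      (sub_nonneg.mpr (hge u (Finset.mem_sdiff.mpr ⟨hu, huS⟩)))
      (sub_nonpos.mpr (hle v (not_not.mp (mt huv.mpr huS))))

theorem Fintype.card_subtype_finset {α : Type*} (L : Finset α) (p : α → Prop)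
    [DecidablePred p] :
    Fintype.card {l : L // p l} = (L.filter p).card :=
  (Fintype.card_congr ((Equiv.subtypeSubtypeEquivSubtypeInter (· ∈ L) p).trans
    (Equiv.subtypeEquivRight (q := (· ∈ L.filter p)) fun _ => Finset.mem_filter.symm))).trans
    (Fintype.card_coe _)

theorem Fintype.exists_equiv_forall_iff {α β : Type*} [Fintype α] [Fintype β]
    (p : α → Prop) (q : β → Prop) [DecidablePred p] [DecidablePred q]
    (hcard : Fintype.card α = Fintype.card β)
    (hpq : Fintype.card {a // p a} = Fintype.card {b // q b}) :
    ∃ e : α ≃ β, ∀ a, p a ↔ q (e a) := by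
  have hnpq : Fintype.card {a // ¬p a} = Fintype.card {b // ¬q b} := by
    rw [Fintype.card_subtype_compl, Fintype.card_subtype_compl, hcard, hpq]
  refine ⟨(Equiv.sumCompl p).symm.trans (((Fintype.equivOfCardEq hpq).sumCongr
    (Fintype.equivOfCardEq hnpq)).trans (Equiv.sumCompl q)), fun a => ?_⟩
  by_cases ha : p a
  · simpa [Equiv.sumCompl_symm_apply_of_pos ha, ha] using (Fintype.equivOfCardEq hpq ⟨a, ha⟩).2
  · simpa [Equiv.sumCompl_symm_apply_of_neg ha, ha] using (Fintype.equivOfCardEq hnpq ⟨a, ha⟩).2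

theorem Finset.exists_equiv_sdiff_mem_iff_notMem {α : Type*} [DecidableEq α] {k : ℕ}
    {P L B : Finset α} (hLP : L ⊆ P) (hBP : B ⊆ P) (hP : P.card = 2 * k) (hL : L.card = k)
    (hB : B.card = k) :
    ∃ g : L ≃ (P \ L : Finset α), ∀ l : L, (l : α) ∈ B ↔ (g l : α) ∉ B := by
  have hcompl : (P \ L).card = k := by rw [Finset.card_sdiff_of_subset hLP]; omega
  have hcross : (L ∩ B).card = ((P \ L) \ B).card := by
    have hunion := Finset.card_union_add_card_inter L B
    rw [sdiff_sdiff_left, Finset.sup_eq_union,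
      Finset.card_sdiff_of_subset (Finset.union_subset hLP hBP)]
    omega
  refine Fintype.exists_equiv_forall_iff (fun l : L => (l : α) ∈ B)
    (fun u : (P \ L : Finset α) => (u : α) ∉ B)
    (by rw [Fintype.card_coe, Fintype.card_coe, hL, hcompl]) ?_
  rw [Fintype.card_subtype_finset L (· ∈ B), Fintype.card_subtype_finset (P \ L) (· ∉ B),
    Finset.filter_mem_eq_inter, Finset.filter_notMem_eq_sdiff, hcross]

theorem exists_isPairing_conj {ι : Type*} [Fintype ι] {m : ℕ} (hm : Fintype.card ι = m)
    (τ : Equiv.Perm ι) (hfix : ∀ j, τ j ≠ j) (hinv : Function.Involutive τ) :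
    ∃ (e : Fin m ≃ ι) (σ : Equiv.Perm (Fin m)), IsPairing σ ∧ ∀ i, e (σ i) = τ (e i) := by
  let e : Fin m ≃ ι := Fintype.equivOfCardEq (by simp [hm])
  refine ⟨e, e.trans (τ.trans e.symm), fun i => ⟨fun h => hfix (e i) ?_, ?_⟩, fun i => ?_⟩
  · simpa using congrArg e h
  · simp [hinv (e i)]
  · simp

theorem Finset.exists_pairing_of_equiv_sdiff {α : Type*} [DecidableEq α] {m : ℕ}
    {P L : Finset α} (hLP : L ⊆ P) (hP : P.card = m) (g : L ≃ (P \ L : Finset α)) :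
    ∃ (x : Fin m → α) (σ : Equiv.Perm (Fin m)),
      Function.Injective x ∧ Set.range x = ↑P ∧ IsPairing σ ∧
      ∀ i, ∃ l : L, (x i = l ∧ x (σ i) = g l) ∨ (x i = g l ∧ x (σ i) = l) := by
  let y : Bool × L → α := fun j => bif j.1 then g j.2 else j.2
  let τ : Equiv.Perm (Bool × L) := Equiv.prodCongr Equiv.boolNot (Equiv.refl L)
  have hcard : Fintype.card (Bool × L) = m := by
    rw [← hP, ← Finset.card_sdiff_add_card_eq_card hLP, ← Fintype.card_coe (P \ L),
      ← Fintype.card_congr g]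
    simp [two_mul]
  obtain ⟨e, σ, hσ, he⟩ := exists_isPairing_conj hcard τ (by simp [τ])
    (fun ⟨b, l⟩ => by simp [τ, Equiv.boolNot])
  have hy : Function.Injective y := by
    rintro ⟨_ | _, l⟩ ⟨_ | _, l'⟩ h
    · change (l : α) = l' at h
      rw [Subtype.ext h]
    · change (l : α) = g l' at h
      exact absurd l.2 (h ▸ (Finset.mem_sdiff.mp (g l').2).2)
    · change (g l : α) = l' at h
      exact absurd l'.2 (h ▸ (Finset.mem_sdiff.mp (g l).2).2)
    · change (g l : α) = g l' at h
      rw [g.injective (Subtype.ext h)]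
  have hrange : Set.range y = ↑P := by
    ext p
    simp only [Set.mem_range, Finset.mem_coe]
    constructor
    · rintro ⟨⟨_ | _, l⟩, rfl⟩
      exacts [hLP l.2, (Finset.mem_sdiff.mp (g l).2).1]
    · intro hp
      by_cases hpL : p ∈ L
      · exact ⟨(false, ⟨p, hpL⟩), rfl⟩
      · exact ⟨(true, g.symm ⟨p, Finset.mem_sdiff.mpr ⟨hp, hpL⟩⟩), by simp [y]⟩
  refine ⟨y ∘ e, σ, hy.comp e.injective,
    by rw [Set.range_comp, e.range_eq_univ, Set.image_univ, hrange], hσ, fun i => ⟨(e i).2, ?_⟩⟩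
  simp only [Function.comp_apply, he]
  rcases e i with ⟨_ | _, l⟩ <;> simp [y, τ]

/-- No-dimension Tverberg-type bound: any set of 2k points in the plane can be partitioned
into k pairs so that some point o is within distance diam(P_i)/2 ≤ diam(P)/2 of (the segment
spanned by) every pair P_i. -/
theorem stmt19 (k : ℕ) (P : Finset Pt) (hP : P.card = 2 * k) :
    ∃ (o : Pt) (x : Fin (2 * k) → Pt) (σ : Equiv.Perm (Fin (2 * k))),
      Function.Injective x ∧ Set.range x = ↑P ∧ IsPairing σ ∧
      ∀ i, Metric.infDist o (segment ℝ (x i) (x (σ i))) ≤ dist (x i) (x (σ i)) / 2 ∧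
        Metric.infDist o (segment ℝ (x i) (x (σ i))) ≤ Metric.diam (↑P : Set Pt) / 2 := by
  classical
  obtain ⟨L, hLP, hL, a, hLa, haL⟩ :=
    P.exists_subset_card_eq_separated (fun p : Pt => p 0) k (by omega)
  obtain ⟨B, hBP, hB, b, hBb, hbB⟩ :=
    P.exists_subset_card_eq_separated (fun p : Pt => p 1) k (by omega)
  obtain ⟨g, hg⟩ := Finset.exists_equiv_sdiff_mem_iff_notMem hLP hBP hP hL hB
  obtain ⟨x, σ, hx, hrange, hσ, hpairs⟩ := Finset.exists_pairing_of_equiv_sdiff hLP hP g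
  let o : Pt := !₂[a, b]
  have hcross : ∀ l : L, ⟪(l : Pt) - o, (g l : Pt) - o⟫_ℝ ≤ 0 := fun l =>
    have hgl := Finset.mem_sdiff.mp (g l).2
    EuclideanSpace.inner_sub_sub_nonpos fun j => by
      fin_cases j
      · exact mul_sub_nonpos_of_separated hLa haL (hLP l.2) hgl.1 (iff_of_true l.2 hgl.2)
      · exact mul_sub_nonpos_of_separated hBb hbB (hLP l.2) hgl.1 (hg l)
  have hxP : ∀ i, x i ∈ P := fun i => by simp [← Finset.mem_coe, ← hrange]
  refine ⟨o, x, σ, hx, hrange, hσ, fun i => ?_⟩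
  have hnear : Metric.infDist o (segment ℝ (x i) (x (σ i))) ≤ dist (x i) (x (σ i)) / 2 := by
    obtain ⟨l, ⟨hi, hσi⟩ | ⟨hi, hσi⟩⟩ := hpairs i <;> rw [hi, hσi]
    · exact infDist_segment_le_of_inner_sub_sub_nonpos (hcross l)
    · rw [segment_symm, dist_comm]
      exact infDist_segment_le_of_inner_sub_sub_nonpos (hcross l)
  refine ⟨hnear, hnear.trans ?_⟩
  gcongr
  exact Metric.dist_le_diam_of_mem P.finite_toSet.isBounded (hxP i) (hxP (σ i))
end
end
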